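/- If a blue vertex u in the residual graph G^D has at least four white neighbors, then playing u decreases the potential f(G^D) = 5|W| + 3|B| by at least 11. -/

import Mathlib

open SimpleGraph
open scoped Classical

/-- The closed neighborhood N[v] of a vertex. -/
def cN {V : Type*} (G : SimpleGraph V) (v : V) : Set V := insert v (G.neighborSet v)

/-- Closed neighborhood N[D] of a set of vertices. -/
noncomputable def nbhd {V : Type*} (G : SimpleGraph V) (D : Set V) : Set V :=
  ⋃ d ∈ D, cN G d

/-- A vertex is white in the residual graph G^D if it is not dominated. -/
def isWhite {V : Type*} (G : SimpleGraph V) (D : Set V) (v : V) : Prop := v ∉ nbhd G D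

/-- A vertex is red in G^D if its whole closed neighborhood is dominated. -/
def isRed {V : Type*} (G : SimpleGraph V) (D : Set V) (v : V) : Prop :=
  cN G v ⊆ nbhd G D

/-- A vertex is blue in G^D if it is dominated but has an undominated neighbor. -/
def isBlue {V : Type*} (G : SimpleGraph V) (D : Set V) (v : V) : Prop :=
  v ∈ nbhd G D ∧ ¬ isRed G D v

/-- The white-degree of a vertex: its number of white neighbors. -/
noncomputable def whiteDeg {V : Type*} [Fintype V] (G : SimpleGraph V) (D : Set V) (v : V) : ℕ :=
  (Finset.univ.filter fun u => G.Adj v u ∧ isWhite G D u).card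

/-- Potential function: 5 per white vertex, `wB` per blue vertex, 0 per red vertex. -/
noncomputable def pot {V : Type*} [Fintype V] (G : SimpleGraph V) (D : Set V) (wB : ℝ) : ℝ :=
  5 * ((Finset.univ.filter fun u => isWhite G D u).card : ℝ)
  + wB * ((Finset.univ.filter fun u => isBlue G D u).card : ℝ)

/-!
Playing a blue vertex `u` with `k` white neighbours turns those `k` vertices from white into
blue or red, creates no other new blue vertex, and turns `u` itself red. Hence at most
`|W| - k` white and `|B| + k - 1` blue vertices remain, and the potential `5|W| + w|B|`
drops by at least `(5 - w) k + w`, which is `2k + 3 ≥ 11` for `w = 3` and `k ≥ 4`.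
-/

open Finset

section Play

variable {V : Type*} (G : SimpleGraph V) (D : Set V) (u : V)

lemma nbhd_union_singleton : nbhd G (D ∪ {u}) = nbhd G D ∪ cN G u := by
  simp [nbhd, Set.union_comm]

lemma nbhd_subset_nbhd_union_singleton : nbhd G D ⊆ nbhd G (D ∪ {u}) := by
  rw [nbhd_union_singleton]
  exact Set.subset_union_left

lemma isWhite_union_singleton_iff {v : V} :
    isWhite G (D ∪ {u}) v ↔ isWhite G D v ∧ v ∉ cN G u := by
  rw [isWhite, isWhite, nbhd_union_singleton, Set.mem_union, not_or]

lemma isRed_union_singleton_self : isRed G (D ∪ {u}) u := by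
  rw [isRed, nbhd_union_singleton]
  exact Set.subset_union_right

lemma isRed.union_singleton {v : V} (h : isRed G D v) : isRed G (D ∪ {u}) v :=
  h.trans (nbhd_subset_nbhd_union_singleton G D u)

lemma isBlue_union_singleton_imp {v : V} (hv : isBlue G (D ∪ {u}) v) :
    v ≠ u ∧ (isBlue G D v ∨ (G.Adj u v ∧ isWhite G D v)) := by
  obtain ⟨hdom, hnotRed⟩ := hv
  have hvu : v ≠ u := by
    rintro rfl
    exact hnotRed (isRed_union_singleton_self G D v)
  refine ⟨hvu, ?_⟩
  by_cases hwhite : isWhite G D v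
  · rw [nbhd_union_singleton] at hdom
    rcases hdom with hdom | rfl | hadj
    · exact absurd hdom hwhite
    · exact absurd rfl hvu
    · exact Or.inr ⟨hadj, hwhite⟩
  · exact Or.inl ⟨not_not.mp hwhite, fun hred => hnotRed (hred.union_singleton G D u)⟩

end Play

section Counting

variable {V : Type*} [Fintype V] (G : SimpleGraph V) (D : Set V) (u : V)

noncomputable def whiteFinset : Finset V := univ.filter (isWhite G D)

noncomputable def blueFinset : Finset V := univ.filter (isBlue G D)

noncomputable def whiteNeighborFinset : Finset V := univ.filter fun v => G.Adj u v ∧ isWhite G D v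

lemma pot_eq (wB : ℝ) : pot G D wB = 5 * #(whiteFinset G D) + wB * #(blueFinset G D) := rfl

lemma whiteNeighborFinset_subset_whiteFinset : whiteNeighborFinset G D u ⊆ whiteFinset G D :=
  monotone_filter_right _ fun _ _ h => h.2

lemma disjoint_blueFinset_whiteNeighborFinset :
    Disjoint (blueFinset G D) (whiteNeighborFinset G D u) :=
  disjoint_filter.mpr fun _ _ hblue hwhite => hwhite.2 hblue.1

lemma whiteFinset_union_singleton_subset :
    whiteFinset G (D ∪ {u}) ⊆ whiteFinset G D \ whiteNeighborFinset G D u := by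
  intro v hv
  simp only [whiteFinset, whiteNeighborFinset, mem_sdiff, mem_filter, mem_univ, true_and,
    isWhite_union_singleton_iff, cN, Set.mem_insert_iff, mem_neighborSet] at hv ⊢
  exact ⟨hv.1, fun hadj => hv.2 (Or.inr hadj.1)⟩

lemma blueFinset_union_singleton_subset :
    blueFinset G (D ∪ {u}) ⊆ (blueFinset G D ∪ whiteNeighborFinset G D u).erase u := by
  intro v hv
  obtain ⟨hvu, hv⟩ := isBlue_union_singleton_imp G D u (mem_filter.mp hv).2
  simpa [blueFinset, whiteNeighborFinset, hvu] using hv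

lemma card_whiteFinset_union_singleton_add_whiteDeg_le :
    #(whiteFinset G (D ∪ {u})) + whiteDeg G D u ≤ #(whiteFinset G D) := by
  calc #(whiteFinset G (D ∪ {u})) + whiteDeg G D u
      ≤ #(whiteFinset G D \ whiteNeighborFinset G D u) + #(whiteNeighborFinset G D u) :=
        Nat.add_le_add_right (card_le_card (whiteFinset_union_singleton_subset G D u)) _
    _ = #(whiteFinset G D) :=
        card_sdiff_add_card_eq_card (whiteNeighborFinset_subset_whiteFinset G D u)

lemma card_blueFinset_union_singleton_add_one_le (hu : isBlue G D u) :
    #(blueFinset G (D ∪ {u})) + 1 ≤ #(blueFinset G D) + whiteDeg G D u := by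
  have hmem : u ∈ blueFinset G D ∪ whiteNeighborFinset G D u :=
    mem_union_left _ (mem_filter.mpr ⟨mem_univ u, hu⟩)
  calc #(blueFinset G (D ∪ {u})) + 1
      ≤ #((blueFinset G D ∪ whiteNeighborFinset G D u).erase u) + 1 :=
        Nat.add_le_add_right (card_le_card (blueFinset_union_singleton_subset G D u)) _
    _ = #(blueFinset G D ∪ whiteNeighborFinset G D u) := card_erase_add_one hmem
    _ = #(blueFinset G D) + whiteDeg G D u :=
        card_union_of_disjoint (disjoint_blueFinset_whiteNeighborFinset G D u)

lemma pot_union_singleton_le {wB : ℝ} (hwB : 0 ≤ wB) (hu : isBlue G D u) :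
    pot G (D ∪ {u}) wB + (5 - wB) * whiteDeg G D u + wB ≤ pot G D wB := by
  have hwhite : (#(whiteFinset G (D ∪ {u})) : ℝ) + whiteDeg G D u ≤ #(whiteFinset G D) := by
    exact_mod_cast card_whiteFinset_union_singleton_add_whiteDeg_le G D u
  have hblue : (#(blueFinset G (D ∪ {u})) : ℝ) + 1 ≤ #(blueFinset G D) + whiteDeg G D u := by
    exact_mod_cast card_blueFinset_union_singleton_add_one_le G D u hu
  rw [pot_eq, pot_eq]
  nlinarith [mul_le_mul_of_nonneg_left hblue hwB]

end Counting

/-- A blue vertex with at least four white neighbors decreases the potential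
f = 5|W| + 3|B| by at least 11 when played. -/
theorem stmt_9 {V : Type*} [Fintype V] (G : SimpleGraph V) (D : Set V) (u : V)
    (hu : isBlue G D u) (h4 : 4 ≤ whiteDeg G D u) :
    pot G (D ∪ {u}) 3 ≤ pot G D 3 - 11 := by
  have hdrop := pot_union_singleton_le G D u (by norm_num : (0 : ℝ) ≤ 3) hu
  have hk : (4 : ℝ) ≤ whiteDeg G D u := by exact_mod_cast h4
  linarith
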